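/- arXiv:0708.3947 — 8 statements merged into one kernel-verified Lean document; each statement's English description precedes it below -/
import Mathlib

section
/- Let C be a finite subset of the unit sphere S³ ⊆ ℝ⁴ such that any two distinct points c, c' ∈ C satisfy ⟨c, c'⟩ ≤ 1/6. Then C has at most 10 elements. -/
/-!
Delsarte's linear programming bound. On unit vectors of `ℝⁿ` the kernels `1`, `t`, `t² - 1/n`
(the Gram kernel of the traceless part of `c ⊗ c`) and the Schur product `t (t² - 1/n)` are
positive semidefinite. The cubic `f t = (t - 1/6) (t + 7/10)²` equals
`17/75 + 38/75 t + 37/30 (t² - 1/4) + t (t² - 1/4)`, so summing `f ⟪c, c'⟫` over all pairs of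
`C` gives at least `17/75 |C|²`; since `f ≤ 0` on `[-1, 1/6]`, the same sum is at most
`f 1 |C| = 289/120 |C|`. Hence `|C| ≤ 85/8`.
-/

open scoped RealInnerProductSpace

open Finset

section Gram

variable {α E : Type*} [NormedAddCommGroup E] [InnerProductSpace ℝ E]

lemma sum_sum_inner_nonneg (s : Finset α) (F : α → E) :
    0 ≤ ∑ a ∈ s, ∑ b ∈ s, ⟪F a, F b⟫ := by
  have h := real_inner_self_nonneg (x := ∑ a ∈ s, F a)
  rw [sum_inner] at h
  simpa only [inner_sum] using h

lemma sum_sum_le_card_mul_of_inner_nonpos (C : Finset E) (hunit : ∀ c ∈ C, ‖c‖ = 1)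
    (f : ℝ → ℝ) (hneg : ∀ c ∈ C, ∀ c' ∈ C, c ≠ c' → f ⟪c, c'⟫ ≤ 0) :
    ∑ c ∈ C, ∑ c' ∈ C, f ⟪c, c'⟫ ≤ C.card * f 1 := by
  classical
  rw [← nsmul_eq_mul, ← sum_const]
  refine sum_le_sum fun c hc => ?_
  rw [← add_sum_erase _ _ hc, real_inner_self_eq_norm_sq, hunit c hc, one_pow]
  have hrest : ∑ c' ∈ C.erase c, f ⟪c, c'⟫ ≤ 0 := sum_nonpos fun c' hc' =>
    hneg c hc c' (mem_of_mem_erase hc') (ne_of_mem_erase hc').symm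
  linarith

end Gram

namespace EuclideanSpace

variable {ι κ : Type*} [Fintype ι] [Fintype κ]

def tmul (u : EuclideanSpace ℝ ι) (v : EuclideanSpace ℝ κ) : EuclideanSpace ℝ (ι × κ) :=
  WithLp.toLp 2 fun p => u p.1 * v p.2

lemma inner_tmul (u u' : EuclideanSpace ℝ ι) (v v' : EuclideanSpace ℝ κ) :
    ⟪tmul u v, tmul u' v'⟫ = ⟪u, u'⟫ * ⟪v, v'⟫ := by
  simp only [tmul, PiLp.inner_apply, Fintype.sum_prod_type, sum_mul_sum]
  refine sum_congr rfl fun i _ => sum_congr rfl fun j _ => ?_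
  simp only [RCLike.inner_apply, conj_trivial]
  ring

lemma sum_mul_self_eq_one {c : EuclideanSpace ℝ ι} (hc : ‖c‖ = 1) : ∑ i, c i * c i = 1 := by
  have h := real_inner_self_eq_norm_sq c
  rw [hc, one_pow, PiLp.inner_apply] at h
  simpa only [RCLike.inner_apply, conj_trivial] using h

variable [DecidableEq ι]

noncomputable def tracelessSq (c : EuclideanSpace ℝ ι) : EuclideanSpace ℝ (ι × ι) :=
  WithLp.toLp 2 fun p => c p.1 * c p.2 - if p.1 = p.2 then (Fintype.card ι : ℝ)⁻¹ else 0

lemma inner_tracelessSq {c c' : EuclideanSpace ℝ ι} (hc : ‖c‖ = 1) (hc' : ‖c'‖ = 1) :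
    ⟪tracelessSq c, tracelessSq c'⟫ = ⟪c, c'⟫ ^ 2 - (Fintype.card ι : ℝ)⁻¹ := by
  have hn : (Fintype.card ι : ℝ) ≠ 0 := by
    intro h0
    rw [Nat.cast_eq_zero, Fintype.card_eq_zero_iff] at h0
    simpa using sum_mul_self_eq_one hc
  have hsq : ∑ i, ∑ j, c' i * c' j * (c i * c j) = (∑ i, c' i * c i) ^ 2 := by
    rw [sq, sum_mul_sum]
    exact sum_congr rfl fun i _ => sum_congr rfl fun j _ => by ring
  simp only [tracelessSq, PiLp.inner_apply, RCLike.inner_apply, Real.ringHom_apply, mul_sub,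
    sub_mul, ite_mul, zero_mul, mul_ite, mul_zero, sum_sub_distrib, Fintype.sum_prod_type,
    sum_ite_eq, mem_univ, ↓reduceIte, sum_const, card_univ, nsmul_eq_mul]
  rw [hsq, ← mul_sum, ← sum_mul, sum_mul_self_eq_one hc, sum_mul_self_eq_one hc']
  field_simp
  ring

end EuclideanSpace

open EuclideanSpace

section Delsarte

variable {ι : Type*} [Fintype ι] [DecidableEq ι] {a₀ a₁ a₂ a₃ : ℝ}

lemma sq_card_mul_le_sum_sum (C : Finset (EuclideanSpace ℝ ι)) (hunit : ∀ c ∈ C, ‖c‖ = 1)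
    (f : ℝ → ℝ) (ha₁ : 0 ≤ a₁) (ha₂ : 0 ≤ a₂) (ha₃ : 0 ≤ a₃)
    (hf : ∀ t, f t = a₀ + a₁ * t + a₂ * (t ^ 2 - (Fintype.card ι : ℝ)⁻¹) +
      a₃ * (t * (t ^ 2 - (Fintype.card ι : ℝ)⁻¹))) :
    a₀ * C.card ^ 2 ≤ ∑ c ∈ C, ∑ c' ∈ C, f ⟪c, c'⟫ := by
  have hlin := sum_sum_inner_nonneg C id
  have hsq := sum_sum_inner_nonneg C tracelessSq
  have hcube := sum_sum_inner_nonneg C fun c => tmul c (tracelessSq c)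
  rw [sum_congr rfl fun c hc => sum_congr rfl fun c' hc' =>
    inner_tracelessSq (hunit c hc) (hunit c' hc')] at hsq
  rw [sum_congr rfl fun c hc => sum_congr rfl fun c' hc' => by
    rw [inner_tmul, inner_tracelessSq (hunit c hc) (hunit c' hc')]] at hcube
  simp only [hf, sum_add_distrib, ← mul_sum, sum_const, nsmul_eq_mul, id] at hlin hsq hcube ⊢
  linarith [mul_nonneg ha₁ hlin, mul_nonneg ha₂ hsq, mul_nonneg ha₃ hcube]

theorem card_le_div_of_delsarte (C : Finset (EuclideanSpace ℝ ι)) (hC : C.Nonempty)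
    (hunit : ∀ c ∈ C, ‖c‖ = 1) (f : ℝ → ℝ) (ha₀ : 0 < a₀) (ha₁ : 0 ≤ a₁) (ha₂ : 0 ≤ a₂)
    (ha₃ : 0 ≤ a₃)
    (hf : ∀ t, f t = a₀ + a₁ * t + a₂ * (t ^ 2 - (Fintype.card ι : ℝ)⁻¹) +
      a₃ * (t * (t ^ 2 - (Fintype.card ι : ℝ)⁻¹)))
    (hneg : ∀ c ∈ C, ∀ c' ∈ C, c ≠ c' → f ⟪c, c'⟫ ≤ 0) :
    (C.card : ℝ) ≤ f 1 / a₀ := by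
  have hlower := sq_card_mul_le_sum_sum C hunit f ha₁ ha₂ ha₃ hf
  have hupper := sum_sum_le_card_mul_of_inner_nonpos C hunit f hneg
  have hN : (0 : ℝ) < C.card := by exact_mod_cast hC.card_pos
  have h : (C.card : ℝ) * (C.card * a₀) ≤ C.card * f 1 := by linarith
  rw [le_div_iff₀ ha₀]
  exact le_of_mul_le_mul_left h hN

end Delsarte

theorem card_le_ten_of_inner_le_one_sixth
    (C : Finset (EuclideanSpace ℝ (Fin 4)))
    (hunit : ∀ c ∈ C, ‖c‖ = 1)
    (hinner : ∀ c ∈ C, ∀ c' ∈ C, c ≠ c' → ⟪c, c'⟫ ≤ (1 / 6 : ℝ)) :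
    C.card ≤ 10 := by
  rcases C.eq_empty_or_nonempty with rfl | hC
  · simp
  have hbound := card_le_div_of_delsarte C hC hunit (fun t => (t - 1 / 6) * (t + 7 / 10) ^ 2)
    (a₀ := 17 / 75) (a₁ := 38 / 75) (a₂ := 37 / 30) (a₃ := 1) (by norm_num) (by norm_num)
    (by norm_num) (by norm_num) (fun t => by rw [Fintype.card_fin]; push_cast; ring)
    (fun c hc c' hc' hne => mul_nonpos_of_nonpos_of_nonneg
      (by linarith [hinner c hc c' hc' hne]) (sq_nonneg _))
  have h11 : (C.card : ℝ) < 11 := by norm_num at hbound; linarith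
  exact Nat.lt_succ_iff.mp (by exact_mod_cast h11)
end

section
/- Let k > 1 be a real number, let C be a finite subset of the unit sphere S^{n-1} ⊆ ℝⁿ with ⟨c, c'⟩ ≤ 1/k for all distinct c, c' ∈ C, let x ∈ C, and let N_x = { y ∈ C : ⟨x, y⟩ = 1/k }. For y ∈ N_x define y* = (y − x/k)/√(1 − 1/k²). Then each y* is a unit vector orthogonal to x, the map y ↦ y* is injective on N_x, and for all distinct y, z ∈ N_x one has ⟨y*, z*⟩ ≤ 1/(k+1). (Thus the points y* form an (n−1, |N_x|, 1/(k+1)) spherical code in the hyperplane orthogonal to x.) -/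
/-!
Writing `t = 1/k`, a point `y` of the cap `⟪x, y⟫ = t` splits as `y = t • x + (y - t • x)` with the
second summand orthogonal to `x` and of squared norm `1 - t²`. Hence
`⟪y*, z*⟫ = (⟪y, z⟫ - t²) / (1 - t²)`, and the bound `⟪y, z⟫ ≤ t` becomes
`⟪y*, z*⟫ ≤ (t - t²) / (1 - t²) = t / (1 + t) = 1 / (k + 1)`.
-/

open scoped RealInnerProductSpace

namespace InnerProductSpace

variable {E : Type*} [NormedAddCommGroup E] [InnerProductSpace ℝ E]

/-- The paper's `y*`, with `t = 1/k`. -/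
noncomputable def normalizedTangent (t : ℝ) (x y : E) : E :=
  (√(1 - t ^ 2))⁻¹ • (y - t • x)

lemma one_sub_sq_pos_of_abs_lt_one {t : ℝ} (ht : |t| < 1) : 0 < 1 - t ^ 2 := by
  nlinarith [sq_abs t, abs_nonneg t]

lemma inner_sub_smul_sub_smul_of_inner_eq {t : ℝ} {x y z : E} (hx : ‖x‖ = 1)
    (hy : ⟪x, y⟫ = t) (hz : ⟪x, z⟫ = t) :
    ⟪y - t • x, z - t • x⟫ = ⟪y, z⟫ - t ^ 2 := by
  have hxx : ⟪x, x⟫ = 1 := by rw [real_inner_self_eq_norm_sq, hx, one_pow]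
  rw [inner_sub_left, inner_sub_right, inner_sub_right, real_inner_smul_left,
    real_inner_smul_left, real_inner_smul_right, real_inner_smul_right, hxx,
    real_inner_comm x y, hy, hz]
  ring

lemma inner_normalizedTangent {t : ℝ} {x y z : E} (ht : |t| < 1) (hx : ‖x‖ = 1)
    (hy : ⟪x, y⟫ = t) (hz : ⟪x, z⟫ = t) :
    ⟪normalizedTangent t x y, normalizedTangent t x z⟫ = (⟪y, z⟫ - t ^ 2) / (1 - t ^ 2) := by
  have hpos := one_sub_sq_pos_of_abs_lt_one ht
  rw [normalizedTangent, normalizedTangent, real_inner_smul_left, real_inner_smul_right,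
    inner_sub_smul_sub_smul_of_inner_eq hx hy hz, ← mul_assoc, ← mul_inv, ← sq,
    Real.sq_sqrt hpos.le, inv_mul_eq_div]

lemma norm_normalizedTangent {t : ℝ} {x y : E} (ht : |t| < 1) (hx : ‖x‖ = 1) (hy : ‖y‖ = 1)
    (hxy : ⟪x, y⟫ = t) : ‖normalizedTangent t x y‖ = 1 := by
  have hyy : ⟪y, y⟫ = 1 := by rw [real_inner_self_eq_norm_sq, hy, one_pow]
  have hself := inner_normalizedTangent ht hx hxy hxy
  rw [hyy, div_self (one_sub_sq_pos_of_abs_lt_one ht).ne', real_inner_self_eq_norm_sq] at hself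
  exact (pow_eq_one_iff_of_nonneg (norm_nonneg _) two_ne_zero).mp hself

lemma inner_normalizedTangent_eq_zero {t : ℝ} {x y : E} (hx : ‖x‖ = 1) (hxy : ⟪x, y⟫ = t) :
    ⟪x, normalizedTangent t x y⟫ = 0 := by
  rw [normalizedTangent, real_inner_smul_right, inner_sub_right, real_inner_smul_right,
    real_inner_self_eq_norm_sq, hx, hxy]
  ring

lemma normalizedTangent_injective {t : ℝ} (ht : |t| < 1) (x : E) :
    Function.Injective (normalizedTangent t x) := by
  have hs : (√(1 - t ^ 2))⁻¹ ≠ 0 :=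
    inv_ne_zero (Real.sqrt_pos.mpr (one_sub_sq_pos_of_abs_lt_one ht)).ne'
  exact fun y z h => sub_left_injective (smul_right_injective E hs h)

lemma inner_normalizedTangent_le {t : ℝ} {x y z : E} (ht : |t| < 1) (hx : ‖x‖ = 1)
    (hy : ⟪x, y⟫ = t) (hz : ⟪x, z⟫ = t) (hyz : ⟪y, z⟫ ≤ t) :
    ⟪normalizedTangent t x y, normalizedTangent t x z⟫ ≤ t / (1 + t) := by
  have hpos := one_sub_sq_pos_of_abs_lt_one ht
  have h1t : 0 < 1 + t := by linarith [neg_abs_le t]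
  calc ⟪normalizedTangent t x y, normalizedTangent t x z⟫ = (⟪y, z⟫ - t ^ 2) / (1 - t ^ 2) :=
        inner_normalizedTangent ht hx hy hz
    _ ≤ (t - t ^ 2) / (1 - t ^ 2) := by gcongr
    _ = t / (1 + t) := by field_simp; ring

end InnerProductSpace

open InnerProductSpace in
theorem iterated_kissing_configuration
    (n : ℕ) (k : ℝ) (hk : 1 < k)
    (C : Finset (EuclideanSpace ℝ (Fin n)))
    (hunit : ∀ c ∈ C, ‖c‖ = 1)
    (hinner : ∀ c ∈ C, ∀ c' ∈ C, c ≠ c' → ⟪c, c'⟫ ≤ 1 / k)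
    (x : EuclideanSpace ℝ (Fin n)) (hx : x ∈ C)
    (Nx : Finset (EuclideanSpace ℝ (Fin n)))
    (hNx : ∀ y, y ∈ Nx ↔ y ∈ C ∧ ⟪x, y⟫ = 1 / k)
    (star : EuclideanSpace ℝ (Fin n) → EuclideanSpace ℝ (Fin n))
    (hstar : ∀ y, star y = (Real.sqrt (1 - 1 / k ^ 2))⁻¹ • (y - k⁻¹ • x)) :
    (∀ y ∈ Nx, ‖star y‖ = 1) ∧
    (∀ y ∈ Nx, ⟪x, star y⟫ = (0 : ℝ)) ∧
    (∀ y ∈ Nx, ∀ z ∈ Nx, star y = star z → y = z) ∧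
    (∀ y ∈ Nx, ∀ z ∈ Nx, y ≠ z → ⟪star y, star z⟫ ≤ 1 / (k + 1)) := by
  have hk0 : 0 < k := by linarith
  have ht : |k⁻¹| < 1 := by rw [abs_of_pos (inv_pos.mpr hk0)]; exact inv_lt_one_of_one_lt₀ hk
  have hstar' : star = normalizedTangent k⁻¹ x := by
    funext y; rw [hstar, normalizedTangent, inv_pow, one_div]
  have hbound : 1 / (k + 1) = k⁻¹ / (1 + k⁻¹) := by field_simp
  have hmem : ∀ y ∈ Nx, y ∈ C ∧ ⟪x, y⟫ = k⁻¹ := fun y hy => by simpa using (hNx y).1 hy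
  have hx1 := hunit x hx
  subst hstar'
  refine ⟨fun y hy => norm_normalizedTangent ht hx1 (hunit y (hmem y hy).1) (hmem y hy).2,
    fun y hy => inner_normalizedTangent_eq_zero hx1 (hmem y hy).2,
    fun y _ z _ h => normalizedTangent_injective ht x h,
    fun y hy z hz hyz => hbound ▸ inner_normalizedTangent_le ht hx1 (hmem y hy).2 (hmem z hz).2
      (one_div k ▸ hinner y (hmem y hy).1 z (hmem z hz).1 hyz)⟩
end

section
/- (Equality condition for the linear programming bound.) Let n ≥ 2, let t < 1, let F : ℝ → ℝ, and let f₀ > 0. Suppose: (i) for every finite subset C of the unit sphere S^{n-1} ⊆ ℝⁿ one has Σ_{(c,c') ∈ C×C} F(⟨c, c'⟩) ≥ f₀ · |C|², and (ii) F(x) ≤ 0 for all x ∈ [−1, t]. If C is a finite subset of S^{n-1} in which any two distinct points have inner product at most t and |C| = F(1)/f₀, then F(⟨c, c'⟩) = 0 for all distinct c, c' ∈ C. -/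
/-!
On the diagonal the double sum of `F` contributes `|C| F(1) = f₀ |C|²`, so hypothesis (i) says
that the off-diagonal sum is nonnegative. By (ii) every off-diagonal term is nonpositive, hence
every one of them vanishes.
-/

open scoped RealInnerProductSpace

open Finset

theorem Finset.sum_sum_eq_sum_add_sum_sum_erase {α M : Type*} [DecidableEq α] [AddCommMonoid M]
    (s : Finset α) (g : α → α → M) :
    ∑ c ∈ s, ∑ c' ∈ s, g c c' = ∑ c ∈ s, g c c + ∑ c ∈ s, ∑ c' ∈ s.erase c, g c c' := by
  rw [← sum_add_distrib]
  exact sum_congr rfl fun c hc => (add_sum_erase s (g c) hc).symm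

theorem Finset.eq_zero_of_nonpos_of_card_mul_le_sum_sum {α : Type*} (s : Finset α)
    (g : α → α → ℝ) (a : ℝ) (hdiag : ∀ c ∈ s, g c c = a)
    (hoff : ∀ c ∈ s, ∀ c' ∈ s, c ≠ c' → g c c' ≤ 0)
    (hsum : #s * a ≤ ∑ c ∈ s, ∑ c' ∈ s, g c c') :
    ∀ c ∈ s, ∀ c' ∈ s, c ≠ c' → g c c' = 0 := by
  classical
  have hrow : ∀ c ∈ s, ∀ c' ∈ s.erase c, g c c' ≤ 0 := fun c hc c' hc' =>
    hoff c hc c' (mem_of_mem_erase hc') (ne_of_mem_erase hc').symm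
  have hrow_sum : ∀ c ∈ s, ∑ c' ∈ s.erase c, g c c' ≤ 0 := fun c hc => sum_nonpos (hrow c hc)
  have hoff_sum : ∑ c ∈ s, ∑ c' ∈ s.erase c, g c c' = 0 := by
    refine le_antisymm (sum_nonpos hrow_sum) ?_
    rw [sum_sum_eq_sum_add_sum_sum_erase, sum_congr rfl hdiag, sum_const, nsmul_eq_mul] at hsum
    linarith
  intro c hc c' hc' hne
  have hrow_zero := (sum_eq_zero_iff_of_nonpos hrow_sum).mp hoff_sum c hc
  exact (sum_eq_zero_iff_of_nonpos (hrow c hc)).mp hrow_zero c' (mem_erase.mpr ⟨hne.symm, hc'⟩)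

theorem linear_programming_bound_equality_general
    (n : ℕ) (t : ℝ)
    (F : ℝ → ℝ) (f₀ : ℝ) (hf₀ : 0 < f₀)
    (hpos : ∀ C : Finset (EuclideanSpace ℝ (Fin n)), (∀ c ∈ C, ‖c‖ = 1) →
      f₀ * (C.card : ℝ) ^ 2 ≤ ∑ c ∈ C, ∑ c' ∈ C, F ⟪c, c'⟫)
    (hneg : ∀ x ∈ Set.Icc (-1 : ℝ) t, F x ≤ 0)
    (C : Finset (EuclideanSpace ℝ (Fin n)))
    (hunit : ∀ c ∈ C, ‖c‖ = 1)
    (hinner : ∀ c ∈ C, ∀ c' ∈ C, c ≠ c' → ⟪c, c'⟫ ≤ t)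
    (hcard : (C.card : ℝ) = F 1 / f₀) :
    ∀ c ∈ C, ∀ c' ∈ C, c ≠ c' → F ⟪c, c'⟫ = 0 := by
  have hF1 : F 1 = f₀ * #C := by
    rw [hcard]
    field_simp
  refine eq_zero_of_nonpos_of_card_mul_le_sum_sum C (fun c c' => F ⟪c, c'⟫) (F 1)
    (fun c hc => by rw [inner_self_eq_one_of_norm_eq_one (hunit c hc)])
    (fun c hc c' hc' hne => hneg _
      ⟨neg_one_le_real_inner_of_norm_eq_one (hunit c hc) (hunit c' hc'), hinner c hc c' hc' hne⟩) ?_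
  calc (#C : ℝ) * F 1 = f₀ * (#C : ℝ) ^ 2 := by rw [hF1]; ring
    _ ≤ _ := hpos C hunit

theorem linear_programming_bound_equality
    (n : ℕ) (hn : 2 ≤ n) (t : ℝ) (ht : t < 1)
    (F : ℝ → ℝ) (f₀ : ℝ) (hf₀ : 0 < f₀)
    (hpos : ∀ C : Finset (EuclideanSpace ℝ (Fin n)), (∀ c ∈ C, ‖c‖ = 1) →
      f₀ * (C.card : ℝ) ^ 2 ≤ ∑ c ∈ C, ∑ c' ∈ C, F ⟪c, c'⟫)
    (hneg : ∀ x ∈ Set.Icc (-1 : ℝ) t, F x ≤ 0)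
    (C : Finset (EuclideanSpace ℝ (Fin n)))
    (hunit : ∀ c ∈ C, ‖c‖ = 1)
    (hinner : ∀ c ∈ C, ∀ c' ∈ C, c ≠ c' → ⟪c, c'⟫ ≤ t)
    (hcard : (C.card : ℝ) = F 1 / f₀) :
    ∀ c ∈ C, ∀ c' ∈ C, c ≠ c' → F ⟪c, c'⟫ = 0 :=
  linear_programming_bound_equality_general n t F f₀ hf₀ hpos hneg C hunit hinner hcard
end

section
/- For a positive integer k, the equation 10(k+1) + 30·U_k(−2/3) + 60·U_k(1/6) = 0 holds if and only if k = 1 or k = 2, where U_k is the Chebyshev polynomial of the second kind. (Equivalently, 10 + 30·C¹_k(−2/3) + 60·C¹_k(1/6) = 0, which is the condition Σ_{(c,c')∈C²} C¹_k(⟨c,c'⟩) = 0 for the Petersen code C, holds only for k = 1, 2.) -/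
private def petA : ℕ → ℤ
  | 0 => 1
  | 1 => -4
  | n+2 => -4 * petA (n+1) - 9 * petA n

private def petB : ℕ → ℤ
  | 0 => 1
  | 1 => 1
  | n+2 => petB (n+1) - 9 * petB n

private lemma petQ (k : ℕ) :
    (petA (k+1))^2 + 4 * petA (k+1) * petA k + 9 * (petA k)^2 = 9^(k+1) := by
  induction k with
  | zero => simp [petA]
  | succ n ih =>
    show (petA (n+2))^2 + 4 * petA (n+2) * petA (n+1) + 9 * (petA (n+1))^2 = 9^(n+2)
    rw [show petA (n+2) = -4 * petA (n+1) - 9 * petA n from rfl,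
      show (9:ℤ)^(n+2) = 9 * 9^(n+1) by ring]
    linear_combination 9 * ih

private lemma petR (k : ℕ) :
    (petB (k+1))^2 - petB (k+1) * petB k + 9 * (petB k)^2 = 9^(k+1) := by
  induction k with
  | zero => simp [petB]
  | succ n ih =>
    show (petB (n+2))^2 - petB (n+2) * petB (n+1) + 9 * (petB (n+1))^2 = 9^(n+2)
    rw [show petB (n+2) = petB (n+1) - 9 * petB n from rfl,
      show (9:ℤ)^(n+2) = 9 * 9^(n+1) by ring]
    linear_combination 9 * ih

private lemma petAbound (k : ℕ) : 5 * (petA k)^2 ≤ 9^(k+1) := by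
  nlinarith [sq_nonneg (petA (k+1) + 2 * petA k), petQ k]

private lemma petBbound (k : ℕ) : 35 * (petB k)^2 ≤ 4 * 9^(k+1) := by
  nlinarith [sq_nonneg (2 * petB (k+1) - petB k), petR k]

private lemma evalA (k : ℕ) :
    (Polynomial.Chebyshev.U ℝ (k : ℤ)).eval (-2/3) = (petA k : ℝ) / 3^k := by
  induction k using Nat.twoStepInduction with
  | zero => simp [Polynomial.Chebyshev.U_zero, petA]
  | one =>
    rw [show ((1:ℕ):ℤ) = 1 from rfl, Polynomial.Chebyshev.U_one]
    simp [petA]; norm_num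
  | more n ih1 ih2 =>
    rw [show ((n+2:ℕ):ℤ) = (n:ℤ)+2 by push_cast; ring,
      Polynomial.Chebyshev.U_add_two]
    rw [show ((n+1:ℕ):ℤ) = (n:ℤ)+1 by push_cast; ring] at ih2
    simp only [Polynomial.eval_sub, Polynomial.eval_mul, Polynomial.eval_X,
      Polynomial.eval_ofNat, ih1, ih2]
    rw [show petA (n+2) = -4 * petA (n+1) - 9 * petA n from rfl]
    push_cast
    field_simp
    ring

private lemma evalB (k : ℕ) :
    (Polynomial.Chebyshev.U ℝ (k : ℤ)).eval (1/6) = (petB k : ℝ) / 3^k := by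
  induction k using Nat.twoStepInduction with
  | zero => simp [Polynomial.Chebyshev.U_zero, petB]
  | one =>
    rw [show ((1:ℕ):ℤ) = 1 from rfl, Polynomial.Chebyshev.U_one]
    simp [petB]; norm_num
  | more n ih1 ih2 =>
    rw [show ((n+2:ℕ):ℤ) = (n:ℤ)+2 by push_cast; ring,
      Polynomial.Chebyshev.U_add_two]
    rw [show ((n+1:ℕ):ℤ) = (n:ℤ)+1 by push_cast; ring] at ih2
    simp only [Polynomial.eval_sub, Polynomial.eval_mul, Polynomial.eval_X,
      Polynomial.eval_ofNat, ih1, ih2]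
    rw [show petB (n+2) = petB (n+1) - 9 * petB n from rfl]
    push_cast
    field_simp
    ring

theorem petersen_gegenbauer_vanishing (k : ℕ) (hk : 1 ≤ k) :
    10 * ((k : ℝ) + 1) + 30 * (Polynomial.Chebyshev.U ℝ (k : ℤ)).eval (-2 / 3)
      + 60 * (Polynomial.Chebyshev.U ℝ (k : ℤ)).eval (1 / 6) = 0
    ↔ k = 1 ∨ k = 2 := by
  have h3 : (3:ℝ)^k ≠ 0 := by positivity
  rw [show (-2/3 : ℝ) = -2/3 from rfl, evalA, evalB]
  have cast : 10 * ((k : ℝ) + 1) + 30 * ((petA k : ℝ) / 3^k)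
      + 60 * ((petB k : ℝ) / 3^k)
      = (10 * ((((k:ℤ)+1) * 3^k + 3 * petA k + 6 * petB k : ℤ) : ℝ)) / 3^k := by
    push_cast
    field_simp
    ring
  rw [cast, div_eq_zero_iff, or_iff_left h3, mul_eq_zero,
    or_iff_right (by norm_num : (10:ℝ) ≠ 0), Int.cast_eq_zero]
  constructor
  · intro hE
    by_contra hcon
    push_neg at hcon
    rcases le_or_gt k 9 with h9 | h9
    · interval_cases k
      · exact hcon.1 rfl
      · exact hcon.2 rfl
      all_goals exact absurd hE (by decide)
    · exfalso
      have h10 : 10 ≤ k := h9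
      have hk11 : (11:ℤ) ≤ (k:ℤ) + 1 := by exact_mod_cast Nat.succ_le_succ h10
      have h9k : (0:ℤ) < 9^k := by positivity
      have hA : 5 * (petA k)^2 ≤ 9 * 9^k := by
        have h := petAbound k
        rw [show (9:ℤ)^(k+1) = 9 * 9^k by ring] at h; exact h
      have hB : 35 * (petB k)^2 ≤ 4 * (9 * 9^k) := by
        have h := petBbound k
        rw [show (9:ℤ)^(k+1) = 9 * 9^k by ring] at h; exact h
      have h33 : (3:ℤ)^k * 3^k = 9^k := by rw [← mul_pow]; norm_num
      have hsq : ((k:ℤ)+1)^2 * 9^k = (3 * petA k + 6 * petB k)^2 := by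
        linear_combination (((k:ℤ)+1) * 3^k - 3 * petA k - 6 * petB k) * hE
          - ((k:ℤ)+1)^2 * h33
      have h121 : (121:ℤ) * 9^k ≤ ((k:ℤ)+1)^2 * 9^k := by
        apply mul_le_mul_of_nonneg_right _ h9k.le
        nlinarith [hk11]
      nlinarith [hA, hB, h121, hsq, sq_nonneg (3 * petA k - 6 * petB k), h9k]
  · rintro (rfl | rfl) <;> decide
end

section
/- (Semidefinite programming bound.) Let n ≥ 2, let t < 1, let B be a real number, let f₀ > 0, and let F : ℝ³ → ℝ be symmetric (invariant under all permutations of its three arguments). Suppose: (i) for every finite subset C of the unit sphere S^{n-1} ⊆ ℝⁿ one has Σ_{(c,c',c'') ∈ C³} F(⟨c,c'⟩, ⟨c,c''⟩, ⟨c',c''⟩) ≥ f₀ · |C|³; (ii) F(x,y,z) ≤ 0 for all (x,y,z) with −1 ≤ x,y,z ≤ t and 1 + 2xyz − x² − y² − z² ≥ 0; (iii) F(x,x,1) ≤ B for all x ∈ [−1, t]. Then every finite subset C of S^{n-1} of cardinality N in which any two distinct points have inner product at most t satisfies N ≤ (3B + √(9B² + 4f₀(F(1,1,1) − 3B)))/(2f₀).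 -/
/-!
Bound the triple sum of hypothesis (i) from above by sorting the triples `(c, c', c'')` of the
code according to which of their entries coincide. The `N` triples with all entries equal contribute
`F(1,1,1)`; the `3N(N-1)` triples with exactly two equal entries contribute `F(x,x,1) ≤ B` by
symmetry; a triple of distinct points has its three inner products in `D`, since the Gram
determinant of three unit vectors is nonnegative, so it contributes at most `0`. Comparing with (i)
gives `f₀ N² ≤ 3BN + F(1,1,1) - 3B`, and `N` is at most the larger root of this quadratic.
-/

open scoped RealInnerProductSpace
open Finset

theorem gram_det_three_nonneg {E : Type*} [NormedAddCommGroup E] [InnerProductSpace ℝ E]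
    {u v w : E} (hu : ‖u‖ = 1) (hv : ‖v‖ = 1) (hw : ‖w‖ = 1) :
    0 ≤ 1 + 2 * ⟪u, v⟫ * ⟪u, w⟫ * ⟪v, w⟫ - ⟪u, v⟫ ^ 2 - ⟪u, w⟫ ^ 2 - ⟪v, w⟫ ^ 2 := by
  have h := (Matrix.posSemidef_gram ℝ ![u, v, w]).det_nonneg
  simp only [Matrix.det_fin_three, Matrix.gram_apply, Matrix.cons_val_zero, Matrix.cons_val_one,
    Matrix.cons_val_two, Matrix.vecHead, Matrix.vecTail, Function.comp_apply,
    Fin.succ_zero_eq_one, real_inner_self_eq_norm_sq, hu, hv, hw, real_inner_comm u v,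
    real_inner_comm u w, real_inner_comm v w] at h
  linarith

theorem sum_le_add_card_sub_one_mul {α : Type*} [DecidableEq α] {s : Finset α} {x : α}
    (hx : x ∈ s) {f : α → ℝ} {a b : ℝ} (ha : f x ≤ a) (hb : ∀ y ∈ s, y ≠ x → f y ≤ b) :
    ∑ y ∈ s, f y ≤ a + (#s - 1) * b := by
  have hrest := sum_le_card_nsmul (s.erase x) f b fun y hy ↦
    hb y (mem_of_mem_erase hy) (ne_of_mem_erase hy)
  rw [card_erase_of_mem hx, nsmul_eq_mul, Nat.cast_sub (card_pos.2 ⟨x, hx⟩), Nat.cast_one]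
    at hrest
  rw [← add_sum_erase s f hx]
  linarith

theorem sum_sum_sum_le_of_coincidence_bounds {α : Type*} [DecidableEq α] (s : Finset α)
    (Φ : α → α → α → ℝ) {a b : ℝ} (hdiag : ∀ x ∈ s, Φ x x x ≤ a)
    (hpair : ∀ x ∈ s, ∀ y ∈ s, x ≠ y → Φ x x y ≤ b ∧ Φ x y x ≤ b ∧ Φ y x x ≤ b)
    (hdistinct : ∀ x ∈ s, ∀ y ∈ s, ∀ z ∈ s, x ≠ y → x ≠ z → y ≠ z → Φ x y z ≤ 0) :
    ∑ x ∈ s, ∑ y ∈ s, ∑ z ∈ s, Φ x y z ≤ #s * (a + 3 * (#s - 1) * b) := by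
  have hrow : ∀ x ∈ s, ∑ y ∈ s, ∑ z ∈ s, Φ x y z ≤ a + 3 * (#s - 1) * b := by
    intro x hx
    have hon : ∑ z ∈ s, Φ x x z ≤ a + (#s - 1) * b :=
      sum_le_add_card_sub_one_mul hx (hdiag x hx) fun z hz hzx ↦ (hpair x hx z hz hzx.symm).1
    have hoff : ∀ y ∈ s, y ≠ x → ∑ z ∈ s, Φ x y z ≤ 2 * b := by
      intro y hy hyx
      calc ∑ z ∈ s, Φ x y z
          ≤ ∑ z ∈ s, ((if z = x then b else 0) + (if z = y then b else 0)) := by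
            refine sum_le_sum fun z hz ↦ ?_
            by_cases hzx : z = x
            · simp only [hzx, hyx.symm, if_true, if_false, add_zero]
              exact (hpair x hx y hy hyx.symm).2.1
            by_cases hzy : z = y
            · simp only [hzy, hyx, if_true, if_false, zero_add]
              exact (hpair y hy x hx hyx).2.2
            simp only [hzx, hzy, if_false, add_zero]
            exact hdistinct x hx y hy z hz (Ne.symm hyx) (Ne.symm hzx) (Ne.symm hzy)
        _ = 2 * b := by
            rw [sum_add_distrib, sum_ite_eq', sum_ite_eq', if_pos hx, if_pos hy]
            ring
    linarith [sum_le_add_card_sub_one_mul hx hon hoff]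
  calc ∑ x ∈ s, ∑ y ∈ s, ∑ z ∈ s, Φ x y z ≤ ∑ _x ∈ s, (a + 3 * (#s - 1) * b) := sum_le_sum hrow
    _ = #s * (a + 3 * (#s - 1) * b) := by rw [sum_const, nsmul_eq_mul]

theorem le_quadratic_root_of_mul_sq_le {a b c x : ℝ} (ha : 0 < a) (h : a * x ^ 2 ≤ b * x + c) :
    x ≤ (b + √(b ^ 2 + 4 * a * c)) / (2 * a) := by
  have hroot : 2 * a * x - b ≤ √(b ^ 2 + 4 * a * c) :=
    Real.le_sqrt_of_sq_le (by nlinarith [mul_le_mul_of_nonneg_left h (by positivity : 0 ≤ 4 * a)])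
  rw [le_div_iff₀ (by positivity)]
  linarith

theorem sum_sum_sum_inner_le {E : Type*} [NormedAddCommGroup E] [InnerProductSpace ℝ E]
    {C : Finset E} {t B : ℝ} {F : ℝ → ℝ → ℝ → ℝ}
    (hsymm : ∀ x y z : ℝ, F x y z = F y x z ∧ F x y z = F x z y)
    (hD : ∀ x y z : ℝ, -1 ≤ x → x ≤ t → -1 ≤ y → y ≤ t → -1 ≤ z → z ≤ t →
      0 ≤ 1 + 2 * x * y * z - x ^ 2 - y ^ 2 - z ^ 2 → F x y z ≤ 0)
    (hB : ∀ x ∈ Set.Icc (-1 : ℝ) t, F x x 1 ≤ B)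
    (hunit : ∀ c ∈ C, ‖c‖ = 1) (hinner : ∀ c ∈ C, ∀ c' ∈ C, c ≠ c' → ⟪c, c'⟫ ≤ t) :
    ∑ c ∈ C, ∑ c' ∈ C, ∑ c'' ∈ C, F ⟪c, c'⟫ ⟪c, c''⟫ ⟪c', c''⟫ ≤
      #C * (F 1 1 1 + 3 * (#C - 1) * B) := by
  classical
  have hcode : ∀ c ∈ C, ∀ c' ∈ C, c ≠ c' → ⟪c, c'⟫ ∈ Set.Icc (-1) t := fun c hc c' hc' hne ↦
    ⟨neg_one_le_real_inner_of_norm_eq_one (hunit c hc) (hunit c' hc'), hinner c hc c' hc' hne⟩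
  refine sum_sum_sum_le_of_coincidence_bounds C (fun c c' c'' ↦ F ⟪c, c'⟫ ⟪c, c''⟫ ⟪c', c''⟫)
    (fun c hc ↦ by simp [hunit c hc]) (fun c hc c' hc' hne ↦ ?_)
    (fun c hc c' hc' c'' hc'' h₁ h₂ h₃ ↦ ?_)
  · have hF := hB _ (hcode c hc c' hc' hne)
    simp only [inner_self_eq_one_of_norm_eq_one (hunit c hc), real_inner_comm c c']
    refine ⟨?_, ?_, hF⟩
    · rwa [(hsymm 1 _ _).1, (hsymm _ 1 _).2]
    · rwa [(hsymm _ 1 _).2]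
  · obtain ⟨hx₁, hx₂⟩ := hcode c hc c' hc' h₁
    obtain ⟨hy₁, hy₂⟩ := hcode c hc c'' hc'' h₂
    obtain ⟨hz₁, hz₂⟩ := hcode c' hc' c'' hc'' h₃
    exact hD _ _ _ hx₁ hx₂ hy₁ hy₂ hz₁ hz₂
      (gram_det_three_nonneg (hunit c hc) (hunit c' hc') (hunit c'' hc''))

theorem semidefinite_programming_bound_general
    (n : ℕ) (hn : 2 ≤ n) (t : ℝ)
    (B f₀ : ℝ) (hf₀ : 0 < f₀)
    (F : ℝ → ℝ → ℝ → ℝ)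
    (hsymm : ∀ x y z : ℝ, F x y z = F y x z ∧ F x y z = F x z y)
    (hpos : ∀ C : Finset (EuclideanSpace ℝ (Fin n)), (∀ c ∈ C, ‖c‖ = 1) →
      f₀ * (C.card : ℝ) ^ 3 ≤
        ∑ c ∈ C, ∑ c' ∈ C, ∑ c'' ∈ C, F ⟪c, c'⟫ ⟪c, c''⟫ ⟪c', c''⟫)
    (hD : ∀ x y z : ℝ, -1 ≤ x → x ≤ t → -1 ≤ y → y ≤ t → -1 ≤ z → z ≤ t →
      0 ≤ 1 + 2 * x * y * z - x ^ 2 - y ^ 2 - z ^ 2 → F x y z ≤ 0)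
    (hB : ∀ x ∈ Set.Icc (-1 : ℝ) t, F x x 1 ≤ B)
    (C : Finset (EuclideanSpace ℝ (Fin n)))
    (hunit : ∀ c ∈ C, ‖c‖ = 1)
    (hinner : ∀ c ∈ C, ∀ c' ∈ C, c ≠ c' → ⟪c, c'⟫ ≤ t) :
    (C.card : ℝ) ≤
      (3 * B + Real.sqrt (9 * B ^ 2 + 4 * f₀ * (F 1 1 1 - 3 * B))) / (2 * f₀) := by
  have hroot : ∀ N : ℝ, f₀ * N ^ 2 ≤ 3 * B * N + (F 1 1 1 - 3 * B) →
      N ≤ (3 * B + √(9 * B ^ 2 + 4 * f₀ * (F 1 1 1 - 3 * B))) / (2 * f₀) := fun N hN ↦ by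
    convert le_quadratic_root_of_mul_sq_le hf₀ hN using 4
    ring
  obtain rfl | hC := C.eq_empty_or_nonempty
  · -- (i) for a single unit vector is the quadratic inequality at `N = 1`
    let e : EuclideanSpace ℝ (Fin n) := EuclideanSpace.single ⟨0, by omega⟩ 1
    have he : ‖e‖ = 1 := by simp [e]
    have hsingle := hpos {e} (by simpa using he)
    simp only [sum_singleton, card_singleton, Nat.cast_one, one_pow, mul_one,
      inner_self_eq_one_of_norm_eq_one he] at hsingle
    have hone := hroot 1 (by linarith)
    simp only [card_empty, Nat.cast_zero]
    linarith
  have hsum := sum_sum_sum_inner_le hsymm hD hB hunit hinner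
  have hN : (0 : ℝ) < #C := by exact_mod_cast hC.card_pos
  have hcubic := (hpos C hunit).trans hsum
  exact hroot _ (by nlinarith)

theorem semidefinite_programming_bound
    (n : ℕ) (hn : 2 ≤ n) (t : ℝ) (ht : t < 1)
    (B f₀ : ℝ) (hf₀ : 0 < f₀)
    (F : ℝ → ℝ → ℝ → ℝ)
    (hsymm : ∀ x y z : ℝ, F x y z = F y x z ∧ F x y z = F x z y)
    (hpos : ∀ C : Finset (EuclideanSpace ℝ (Fin n)), (∀ c ∈ C, ‖c‖ = 1) →
      f₀ * (C.card : ℝ) ^ 3 ≤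
        ∑ c ∈ C, ∑ c' ∈ C, ∑ c'' ∈ C, F ⟪c, c'⟫ ⟪c, c''⟫ ⟪c', c''⟫)
    (hD : ∀ x y z : ℝ, -1 ≤ x → x ≤ t → -1 ≤ y → y ≤ t → -1 ≤ z → z ≤ t →
      0 ≤ 1 + 2 * x * y * z - x ^ 2 - y ^ 2 - z ^ 2 → F x y z ≤ 0)
    (hB : ∀ x ∈ Set.Icc (-1 : ℝ) t, F x x 1 ≤ B)
    (C : Finset (EuclideanSpace ℝ (Fin n)))
    (hunit : ∀ c ∈ C, ‖c‖ = 1)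
    (hinner : ∀ c ∈ C, ∀ c' ∈ C, c ≠ c' → ⟪c, c'⟫ ≤ t) :
    (C.card : ℝ) ≤
      (3 * B + Real.sqrt (9 * B ^ 2 + 4 * f₀ * (F 1 1 1 - 3 * B))) / (2 * f₀) :=
  semidefinite_programming_bound_general n hn t B f₀ hf₀ F hsymm hpos hD hB C hunit hinner
end

section
/- (Triple-sum counting inequality.) Let n ≥ 2, let t < 1, let B ∈ ℝ, and let F : ℝ³ → ℝ be symmetric under permutations of its arguments with F(x,y,z) ≤ 0 whenever −1 ≤ x,y,z ≤ t and 1 + 2xyz − x² − y² − z² ≥ 0, and F(x,x,1) ≤ B for all x ∈ [−1, t]. Let C be a finite subset of the unit sphere S^{n-1} ⊆ ℝⁿ of cardinality N in which any two distinct points have inner product at most t. Then Σ_{(c,c',c'') ∈ C³} F(⟨c,c'⟩, ⟨c,c''⟩, ⟨c',c''⟩) ≤ N·F(1,1,1) + 3N(N−1)·B. -/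
/-!
Split the triple sum by which indices coincide. The diagonal gives `F 1 1 1`; a triple with
exactly two equal points has inner products `x, x, 1` up to order, so symmetry of `F` bounds it
by `B`; and for three distinct unit vectors the inner products lie in `D`, because
`1 + 2xyz - x² - y² - z²` is their Gram determinant, so `F ≤ 0` there.
-/

open scoped RealInnerProductSpace

open Finset

namespace Finset

variable {α : Type*} [DecidableEq α]

theorem sum_le_add_card_sub_one_mul {s : Finset α} {a : α} (ha : a ∈ s) {f : α → ℝ}
    {A B : ℝ} (hfa : f a ≤ A) (hf : ∀ b ∈ s.erase a, f b ≤ B) :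
    ∑ b ∈ s, f b ≤ A + (#s - 1 : ℝ) * B := by
  have hcard : (#(s.erase a) : ℝ) = #s - 1 := by
    rw [card_erase_of_mem ha, Nat.cast_sub (card_pos.2 ⟨a, ha⟩), Nat.cast_one]
  have hrest : ∑ b ∈ s.erase a, f b ≤ #(s.erase a) • B := sum_le_card_nsmul _ _ _ hf
  rw [nsmul_eq_mul, hcard] at hrest
  rw [← add_sum_erase _ _ ha]
  linarith

theorem sum_sum_sum_le_of_diag_le (s : Finset α) (g : α → α → α → ℝ) (A B : ℝ)
    (hdiag : ∀ a ∈ s, g a a a ≤ A)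
    (hpair : ∀ a ∈ s, ∀ b ∈ s, a ≠ b →
      g a a b ≤ B ∧ g a b a ≤ B ∧ g b a a ≤ B)
    (hdistinct : ∀ a ∈ s, ∀ b ∈ s, ∀ c ∈ s, a ≠ b → a ≠ c → b ≠ c →
      g a b c ≤ 0) :
    ∑ a ∈ s, ∑ b ∈ s, ∑ c ∈ s, g a b c ≤ #s * A + 3 * #s * (#s - 1 : ℝ) * B := by
  have hrow : ∀ a ∈ s, ∑ b ∈ s, ∑ c ∈ s, g a b c ≤ A + 3 * (#s - 1 : ℝ) * B := by
    intro a ha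
    have hdiagRow : ∑ c ∈ s, g a a c ≤ A + (#s - 1 : ℝ) * B :=
      sum_le_add_card_sub_one_mul ha (hdiag a ha) fun c hc =>
        (hpair a ha c (mem_of_mem_erase hc) (ne_of_mem_erase hc).symm).1
    have hoffRow : ∀ b ∈ s.erase a, ∑ c ∈ s, g a b c ≤ 2 * B := by
      intro b hb
      have hbs := mem_of_mem_erase hb
      have hab := (ne_of_mem_erase hb).symm
      rw [← add_sum_erase _ _ ha, ← add_sum_erase _ _ hb]
      have hrest : ∑ c ∈ (s.erase a).erase b, g a b c ≤ 0 := sum_nonpos fun c hc =>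
        hdistinct a ha b hbs c (mem_of_mem_erase (mem_of_mem_erase hc))
          hab (ne_of_mem_erase (mem_of_mem_erase hc)).symm (ne_of_mem_erase hc).symm
      linarith [(hpair a ha b hbs hab).2.1, (hpair b hbs a ha hab.symm).2.2]
    linarith [sum_le_add_card_sub_one_mul ha hdiagRow hoffRow]
  calc ∑ a ∈ s, ∑ b ∈ s, ∑ c ∈ s, g a b c
      ≤ #s • (A + 3 * (#s - 1 : ℝ) * B) := sum_le_card_nsmul _ _ _ hrow
    _ = #s * A + 3 * #s * (#s - 1 : ℝ) * B := by rw [nsmul_eq_mul]; ring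

end Finset

section InnerProductSpace

variable {E : Type*} [NormedAddCommGroup E] [InnerProductSpace ℝ E]

/-- The left side equals `‖v'‖² ‖w'‖² - ⟪v', w'⟫²` for the projections `v'`, `w'` of `v`, `w`
onto `u^⊥`, so this is Cauchy–Schwarz. -/
theorem gram_det_nonneg_of_norm_eq_one {u v w : E} (hu : ‖u‖ = 1) (hv : ‖v‖ = 1)
    (hw : ‖w‖ = 1) :
    0 ≤ 1 + 2 * ⟪u, v⟫ * ⟪u, w⟫ * ⟪v, w⟫ - ⟪u, v⟫ ^ 2 - ⟪u, w⟫ ^ 2 - ⟪v, w⟫ ^ 2 := by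
  have h := real_inner_mul_inner_self_le (v - ⟪u, v⟫ • u) (w - ⟪u, w⟫ • u)
  simp only [inner_sub_left, inner_sub_right, real_inner_smul_left, real_inner_smul_right,
    inner_self_eq_one_of_norm_eq_one hu, inner_self_eq_one_of_norm_eq_one hv,
    inner_self_eq_one_of_norm_eq_one hw, real_inner_comm u] at h
  nlinarith [h]

end InnerProductSpace

theorem triple_sum_counting_inequality_general
    (n : ℕ) (t : ℝ) (B : ℝ)
    (F : ℝ → ℝ → ℝ → ℝ)
    (hsymm : ∀ x y z : ℝ, F x y z = F y x z ∧ F x y z = F x z y)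
    (hD : ∀ x y z : ℝ, -1 ≤ x → x ≤ t → -1 ≤ y → y ≤ t → -1 ≤ z → z ≤ t →
      0 ≤ 1 + 2 * x * y * z - x ^ 2 - y ^ 2 - z ^ 2 → F x y z ≤ 0)
    (hB : ∀ x ∈ Set.Icc (-1 : ℝ) t, F x x 1 ≤ B)
    (C : Finset (EuclideanSpace ℝ (Fin n))) (N : ℕ) (hN : C.card = N)
    (hunit : ∀ c ∈ C, ‖c‖ = 1)
    (hinner : ∀ c ∈ C, ∀ c' ∈ C, c ≠ c' → ⟪c, c'⟫ ≤ t) :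
    ∑ c ∈ C, ∑ c' ∈ C, ∑ c'' ∈ C, F ⟪c, c'⟫ ⟪c, c''⟫ ⟪c', c''⟫
      ≤ (N : ℝ) * F 1 1 1 + 3 * (N : ℝ) * ((N : ℝ) - 1) * B := by
  classical
  subst hN
  have hself : ∀ c ∈ C, ⟪c, c⟫ = (1 : ℝ) := fun c hc =>
    inner_self_eq_one_of_norm_eq_one (hunit c hc)
  have hmem : ∀ c ∈ C, ∀ c' ∈ C, c ≠ c' → ⟪c, c'⟫ ∈ Set.Icc (-1 : ℝ) t :=
    fun c hc c' hc' hne =>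
    ⟨neg_one_le_real_inner_of_norm_eq_one (hunit c hc) (hunit c' hc'), hinner c hc c' hc' hne⟩
  refine sum_sum_sum_le_of_diag_le C _ _ B (fun c hc => by rw [hself c hc]) ?_ ?_
  · intro a ha b hb hab
    have hF : F ⟪a, b⟫ ⟪a, b⟫ 1 ≤ B := hB _ (hmem a ha b hb hab)
    simp only [hself a ha, real_inner_comm a b]
    refine ⟨?_, ?_, hF⟩
    · rwa [(hsymm _ _ _).1, (hsymm _ _ _).2]
    · rwa [(hsymm _ _ _).2]
  · intro a ha b hb c hc hab hac hbc
    exact hD _ _ _ (hmem a ha b hb hab).1 (hmem a ha b hb hab).2 (hmem a ha c hc hac).1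
      (hmem a ha c hc hac).2 (hmem b hb c hc hbc).1 (hmem b hb c hc hbc).2
      (gram_det_nonneg_of_norm_eq_one (hunit a ha) (hunit b hb) (hunit c hc))

theorem triple_sum_counting_inequality
    (n : ℕ) (hn : 2 ≤ n) (t : ℝ) (ht : t < 1) (B : ℝ)
    (F : ℝ → ℝ → ℝ → ℝ)
    (hsymm : ∀ x y z : ℝ, F x y z = F y x z ∧ F x y z = F x z y)
    (hD : ∀ x y z : ℝ, -1 ≤ x → x ≤ t → -1 ≤ y → y ≤ t → -1 ≤ z → z ≤ t →
      0 ≤ 1 + 2 * x * y * z - x ^ 2 - y ^ 2 - z ^ 2 → F x y z ≤ 0)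
    (hB : ∀ x ∈ Set.Icc (-1 : ℝ) t, F x x 1 ≤ B)
    (C : Finset (EuclideanSpace ℝ (Fin n))) (N : ℕ) (hN : C.card = N)
    (hunit : ∀ c ∈ C, ‖c‖ = 1)
    (hinner : ∀ c ∈ C, ∀ c' ∈ C, c ≠ c' → ⟪c, c'⟫ ≤ t) :
    ∑ c ∈ C, ∑ c' ∈ C, ∑ c'' ∈ C, F ⟪c, c'⟫ ⟪c, c''⟫ ⟪c', c''⟫
      ≤ (N : ℝ) * F 1 1 1 + 3 * (N : ℝ) * ((N : ℝ) - 1) * B :=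
  triple_sum_counting_inequality_general n t B F hsymm hD hB C N hN hunit hinner
end

section
/- (Semidefinite programming bounds are at least as strong as linear programming bounds.) Let n ≥ 2, let t < 1, let g₀ > 0, and let G : ℝ → ℝ satisfy: (i) Σ_{(c,c') ∈ C×C} G(⟨c,c'⟩) ≥ g₀·|C|² for every finite subset C of the unit sphere S^{n-1} ⊆ ℝⁿ, and (ii) G(x) ≤ 0 for all x ∈ [−1, t]. Define F(x,y,z) = (G(x) + G(y) + G(z))/3. Then: (a) Σ_{(c,c',c'') ∈ C³} F(⟨c,c'⟩, ⟨c,c''⟩, ⟨c',c''⟩) ≥ g₀·|C|³ for every finite subset C of S^{n-1}; (b) F(x,y,z) ≤ 0 whenever −1 ≤ x,y,z ≤ t; and (c) F(x,x,1) ≤ G(1)/3 for all x ∈ [−1, t]. (So F satisfies the hypotheses of the semidefinite programming bound with f₀ = g₀ and B = G(1)/3.) -/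
open scoped RealInnerProductSpace

open Finset

/-! Each of the three terms of `F` on `C³` is a pair sum of `G` on `C²` repeated `|C|` times,
so the triple sum of `F` is `|C|` times the pair sum of `G`; (b) and (c) follow pointwise from `G ≤ 0` on `[-1, t]`. -/

theorem Finset.sum_sum_sum_add_add {α R : Type*} [CommSemiring R] (s : Finset α)
    (f : α → α → R) :
    ∑ a ∈ s, ∑ b ∈ s, ∑ c ∈ s, (f a b + f a c + f b c) = 3 * #s * ∑ a ∈ s, ∑ b ∈ s, f a b := by
  simp only [sum_add_distrib, sum_const, nsmul_eq_mul, ← mul_sum]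
  ring

theorem le_sum_sum_sum_avg_of_le_sum_sum {α : Type*} (s : Finset α) (f : α → α → ℝ) (g₀ : ℝ)
    (h : g₀ * #s ^ 2 ≤ ∑ a ∈ s, ∑ b ∈ s, f a b) :
    g₀ * #s ^ 3 ≤ ∑ a ∈ s, ∑ b ∈ s, ∑ c ∈ s, (f a b + f a c + f b c) / 3 := by
  simp only [← sum_div, sum_sum_sum_add_add]
  calc g₀ * #s ^ 3 = #s * (g₀ * #s ^ 2) := by ring
    _ ≤ #s * ∑ a ∈ s, ∑ b ∈ s, f a b := by gcongr
    _ = 3 * #s * (∑ a ∈ s, ∑ b ∈ s, f a b) / 3 := by ring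

theorem sdp_at_least_as_strong_as_lp_general
    (n : ℕ) (t : ℝ)
    (g₀ : ℝ) (G : ℝ → ℝ)
    (hpos : ∀ C : Finset (EuclideanSpace ℝ (Fin n)), (∀ c ∈ C, ‖c‖ = 1) →
      g₀ * (C.card : ℝ) ^ 2 ≤ ∑ c ∈ C, ∑ c' ∈ C, G ⟪c, c'⟫)
    (hneg : ∀ x ∈ Set.Icc (-1 : ℝ) t, G x ≤ 0)
    (F : ℝ → ℝ → ℝ → ℝ)
    (hF : ∀ x y z : ℝ, F x y z = (G x + G y + G z) / 3) :
    (∀ C : Finset (EuclideanSpace ℝ (Fin n)), (∀ c ∈ C, ‖c‖ = 1) →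
      g₀ * (C.card : ℝ) ^ 3 ≤
        ∑ c ∈ C, ∑ c' ∈ C, ∑ c'' ∈ C, F ⟪c, c'⟫ ⟪c, c''⟫ ⟪c', c''⟫) ∧
    (∀ x y z : ℝ, -1 ≤ x → x ≤ t → -1 ≤ y → y ≤ t → -1 ≤ z → z ≤ t →
      F x y z ≤ 0) ∧
    (∀ x ∈ Set.Icc (-1 : ℝ) t, F x x 1 ≤ G 1 / 3) := by
  refine ⟨fun C hC => ?_, fun x y z hx hxt hy hyt hz hzt => ?_, fun x hx => ?_⟩
  · simp only [hF]
    exact le_sum_sum_sum_avg_of_le_sum_sum C (fun c c' => G ⟪c, c'⟫) g₀ (hpos C hC)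
  · have := hneg x ⟨hx, hxt⟩
    have := hneg y ⟨hy, hyt⟩
    have := hneg z ⟨hz, hzt⟩
    rw [hF]
    linarith
  · have := hneg x hx
    rw [hF]
    linarith

theorem sdp_at_least_as_strong_as_lp
    (n : ℕ) (hn : 2 ≤ n) (t : ℝ) (ht : t < 1)
    (g₀ : ℝ) (hg₀ : 0 < g₀) (G : ℝ → ℝ)
    (hpos : ∀ C : Finset (EuclideanSpace ℝ (Fin n)), (∀ c ∈ C, ‖c‖ = 1) →
      g₀ * (C.card : ℝ) ^ 2 ≤ ∑ c ∈ C, ∑ c' ∈ C, G ⟪c, c'⟫)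
    (hneg : ∀ x ∈ Set.Icc (-1 : ℝ) t, G x ≤ 0)
    (F : ℝ → ℝ → ℝ → ℝ)
    (hF : ∀ x y z : ℝ, F x y z = (G x + G y + G z) / 3) :
    (∀ C : Finset (EuclideanSpace ℝ (Fin n)), (∀ c ∈ C, ‖c‖ = 1) →
      g₀ * (C.card : ℝ) ^ 3 ≤
        ∑ c ∈ C, ∑ c' ∈ C, ∑ c'' ∈ C, F ⟪c, c'⟫ ⟪c, c''⟫ ⟪c', c''⟫) ∧
    (∀ x y z : ℝ, -1 ≤ x → x ≤ t → -1 ≤ y → y ≤ t → -1 ≤ z → z ≤ t →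
      F x y z ≤ 0) ∧
    (∀ x ∈ Set.Icc (-1 : ℝ) t, F x x 1 ≤ G 1 / 3) :=
  sdp_at_least_as_strong_as_lp_general n t g₀ G hpos hneg F hF
end

section
/- Let C be a 10-element subset of the unit sphere S³ ⊆ ℝ⁴ such that any two distinct points of C have inner product at most 1/6. Then the number of ordered pairs (c, c') of distinct points of C with ⟨c, c'⟩ = −2/3 equals 30, and the number of ordered pairs with ⟨c, c'⟩ = 1/6 equals 60. -/
/-!
Index the code as `x : ι → E` and let `B = I + J / 5 - (6 / 5) G`, with `G` the Gram matrix of `x`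
and `J` the all-ones matrix. Off the diagonal `B` is an affine function of the inner product, `0` at
`1/6` and `1` at `-2/3`; so `B` is entrywise nonnegative with zero diagonal, whence `tr B = 0` and
`tr B³ ≥ 0`. Its quadratic form is `‖z‖² + (∑ zᵢ)² / 5 - (6 / 5) ‖∑ zᵢ xᵢ‖²`: at most `‖z‖²` on the
hyperplane `∑ zᵢ = 0`, at least `‖z‖²` on the kernel of `z ↦ ∑ zᵢ xᵢ` (of dimension `≥ 6`), and at
most `3 ‖z‖²` everywhere. By min-max, at most one eigenvalue exceeds `1` and at most four are below
`1`; with the two trace conditions this forces the spectrum `3, 1⁵, (-2)⁴`, the eigenvalue `3`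
belonging to the constant vector. Hence `B² + B - 2 = J`, and since `B ≥ 0` this makes `B` a `0/1`
matrix with row sums `3`: the adjacency matrix of the Petersen graph.
-/

open scoped RealInnerProductSpace
open Finset Module Matrix

section Eigenbasis

variable {ι E : Type*} [Fintype ι] [NormedAddCommGroup E] [InnerProductSpace ℝ E]
  {T : E →ₗ[ℝ] E} {b : OrthonormalBasis ι ℝ E} {μ : ι → ℝ}

theorem inner_map_self_eq_sum_of_eigenbasis (hb : ∀ i, T (b i) = μ i • b i) (z : E) :
    ⟪T z, z⟫ = ∑ i, μ i * ⟪b i, z⟫ ^ 2 := by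
  nth_rw 1 [← b.sum_repr' z]
  simp only [map_sum, map_smul, hb, smul_smul, sum_inner, real_inner_smul_left]
  exact sum_congr rfl fun i _ => by ring

theorem finrank_le_card_eigenvalues_le (hb : ∀ i, T (b i) = μ i • b i) (c : ℝ)
    (W : Submodule ℝ E) (hW : ∀ z ∈ W, ⟪T z, z⟫ ≤ c * ‖z‖ ^ 2) :
    finrank ℝ W ≤ #{i | μ i ≤ c} := by
  let coeffs : W →ₗ[ℝ] ({i // μ i ≤ c} → ℝ) :=
    LinearMap.pi fun i => (innerₛₗ ℝ (b i)).comp W.subtype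
  have hinj : Function.Injective coeffs := by
    rw [← LinearMap.ker_eq_bot, LinearMap.ker_eq_bot']
    rintro ⟨z, hzW⟩ hz
    have hcoeff : ∀ i, μ i ≤ c → ⟪b i, z⟫ = 0 := fun i hi => congr_fun hz ⟨i, hi⟩
    have hterm : ∀ i ∈ univ, 0 ≤ (μ i - c) * ⟪b i, z⟫ ^ 2 := fun i _ => by
      rcases le_or_gt (μ i) c with hi | hi
      · simp [hcoeff i hi]
      · exact mul_nonneg (sub_nonneg.2 hi.le) (sq_nonneg _)
    have hsum : ∑ i, (μ i - c) * ⟪b i, z⟫ ^ 2 ≤ 0 := by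
      have := hW z hzW
      rw [inner_map_self_eq_sum_of_eigenbasis hb, ← b.sum_sq_inner_right, mul_sum] at this
      simpa only [sub_mul, sum_sub_distrib, sub_nonpos] using this
    have hzero : ∀ i, ⟪b i, z⟫ = 0 := fun i => by
      rcases le_or_gt (μ i) c with hi | hi
      · exact hcoeff i hi
      · have := (sum_eq_zero_iff_of_nonneg hterm).1 (le_antisymm hsum (sum_nonneg hterm)) i
          (mem_univ i)
        simpa [(sub_pos.2 hi).ne'] using this
    ext1
    simpa [hzero] using (b.sum_repr' z).symm
  simpa [Fintype.card_subtype] using LinearMap.finrank_le_finrank_of_injective hinj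

theorem finrank_le_card_le_eigenvalues (hb : ∀ i, T (b i) = μ i • b i) (c : ℝ)
    (W : Submodule ℝ E) (hW : ∀ z ∈ W, c * ‖z‖ ^ 2 ≤ ⟪T z, z⟫) :
    finrank ℝ W ≤ #{i | c ≤ μ i} := by
  have hb' : ∀ i, (-T) (b i) = (-μ i) • b i := fun i => by simp [hb]
  simpa using finrank_le_card_eigenvalues_le hb' (-c) W fun z hz => by
    simpa [inner_neg_left] using hW z hz

end Eigenbasis

theorem LinearMap.finrank_sub_finrank_le_finrank_ker {K V U : Type*} [DivisionRing K]
    [AddCommGroup V] [Module K V] [AddCommGroup U] [Module K U] [FiniteDimensional K V]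
    [FiniteDimensional K U] (f : V →ₗ[K] U) : finrank K V - finrank K U ≤ finrank K (ker f) := by
  have := f.finrank_range_add_finrank_ker
  have := (range f).finrank_le
  omega

theorem EuclideanSpace.sq_sum_le_card_mul_norm_sq {ι : Type*} [Fintype ι]
    (z : EuclideanSpace ℝ ι) : (∑ i, z i) ^ 2 ≤ Fintype.card ι * ‖z‖ ^ 2 := by
  rw [EuclideanSpace.real_norm_sq_eq]
  exact sq_sum_le_card_mul_sum_sq

namespace Matrix

variable {n : Type*} [Fintype n] [DecidableEq n]

theorem IsHermitian.trace_pow_eq_sum_eigenvalues_pow {𝕜 : Type*} [RCLike 𝕜] {A : Matrix n n 𝕜}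
    (hA : A.IsHermitian) (k : ℕ) : (A ^ k).trace = ∑ i, (hA.eigenvalues i : 𝕜) ^ k := by
  conv_lhs => rw [hA.spectral_theorem, ← map_pow]
  rw [Unitary.conjStarAlgAut_apply, trace_mul_cycle, Unitary.coe_star_mul_self, one_mul,
    diagonal_pow, trace_diagonal]
  rfl

theorem IsHermitian.toEuclideanLin_eigenvectorBasis {A : Matrix n n ℝ} (hA : A.IsHermitian)
    (i : n) :
    toEuclideanLin A (hA.eigenvectorBasis i) = hA.eigenvalues i • hA.eigenvectorBasis i := by
  ext1
  simp [toLpLin_apply, hA.mulVec_eigenvectorBasis]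

theorem IsHermitian.eigenvalues_eq_inner_toEuclideanLin {A : Matrix n n ℝ} (hA : A.IsHermitian)
    (i : n) :
    hA.eigenvalues i = ⟪toEuclideanLin A (hA.eigenvectorBasis i), hA.eigenvectorBasis i⟫ := by
  rw [hA.toEuclideanLin_eigenvectorBasis, real_inner_smul_left, real_inner_self_eq_norm_sq,
    hA.eigenvectorBasis.orthonormal.1 i, one_pow, mul_one]

theorem ext_of_mulVec_orthonormalBasis {ι : Type*} [Fintype ι] {M N : Matrix n n ℝ}
    (b : OrthonormalBasis ι ℝ (EuclideanSpace ℝ n)) (h : ∀ i, M *ᵥ b i = N *ᵥ b i) : M = N :=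
  toEuclideanLin.injective <| b.toBasis.ext fun i => by simp [toLpLin_apply, h]

end Matrix

theorem eq_three_and_eq_one_or_eq_neg_two_of_sum_cubes {ι : Type*} {s : Finset ι} {μ : ι → ℝ}
    {a : ℝ} (hs : #s = 9) (hsum : ∑ r ∈ s, μ r = -a) (hcube : -a ^ 3 ≤ ∑ r ∈ s, μ r ^ 3)
    (ha : 1 ≤ a) (ha' : a ≤ 3) (hle : ∀ r ∈ s, μ r ≤ 1) (hones : 5 ≤ #{r ∈ s | μ r = 1}) :
    a = 3 ∧ ∀ r ∈ s, μ r = 1 ∨ μ r = -2 := by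
  -- `(t + 2)² (4 - t) = 16 + 12 t - t³` is `≥ 0` for `t ≤ 1`, vanishes at `-2` and is `27` at `1`
  set g : ι → ℝ := fun r => (μ r + 2) ^ 2 * (4 - μ r) - 27 * if μ r = 1 then 1 else 0
  have hg : ∀ r ∈ s, 0 ≤ g r := fun r hr => by
    by_cases h : μ r = 1
    · norm_num [g, h]
    · simp only [g, h, if_false, mul_zero, sub_zero]
      exact mul_nonneg (sq_nonneg _) (by linarith [hle r hr])
  have hsum_g : ∑ r ∈ s, g r ≤ a ^ 3 - 12 * a + 9 := by
    have h5 : (5 : ℝ) ≤ #{r ∈ s | μ r = 1} := by exact_mod_cast hones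
    have hP : ∀ r, (μ r + 2) ^ 2 * (4 - μ r) = 16 + 12 * μ r - μ r ^ 3 := fun r => by ring
    have : ∑ r ∈ s, g r
        = 16 * 9 + 12 * ∑ r ∈ s, μ r - ∑ r ∈ s, μ r ^ 3 - 27 * #{r ∈ s | μ r = 1} := by
      simp only [g, hP, sum_sub_distrib, sum_add_distrib, ← mul_sum, sum_boole, sum_const,
        nsmul_eq_mul, hs]
      norm_num
    rw [this, hsum]
    linarith
  have hfac : a ^ 3 - 12 * a + 9 = (a - 3) * (a ^ 2 + 3 * a - 3) := by ring
  have hpos : 0 < a ^ 2 + 3 * a - 3 := by nlinarith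
  have ha3 : a = 3 := by nlinarith [sum_nonneg hg]
  refine ⟨ha3, fun r hr => ?_⟩
  have hzero : ∑ r ∈ s, g r = 0 := le_antisymm (by nlinarith) (sum_nonneg hg)
  have hgr := (sum_eq_zero_iff_of_nonneg hg).1 hzero r hr
  by_cases h : μ r = 1
  · exact Or.inl h
  · right
    simp only [g, h, if_false, mul_zero, sub_zero] at hgr
    have : μ r + 2 = 0 := by
      rcases mul_eq_zero.1 hgr with h2 | h2
      · exact pow_eq_zero_iff two_ne_zero |>.1 h2
      · linarith [hle r hr]
    linarith

theorem exists_eq_three_of_spectral_bounds {ι : Type*} [Fintype ι] [DecidableEq ι] {μ : ι → ℝ}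
    (hcard : Fintype.card ι = 10) (hsum : ∑ r, μ r = 0) (hcube : 0 ≤ ∑ r, μ r ^ 3)
    (hle : ∀ r, μ r ≤ 3) (hle_one : 9 ≤ #{r | μ r ≤ 1}) (hone_le : 6 ≤ #{r | 1 ≤ μ r}) :
    ∃ r₀, μ r₀ = 3 ∧ ∀ r ≠ r₀, μ r = 1 ∨ μ r = -2 := by
  have : Nonempty ι := Fintype.card_pos_iff.1 (by omega)
  obtain ⟨r₀, hmax⟩ := Finite.exists_max μ
  have hrest : ∀ r ≠ r₀, μ r ≤ 1 := by
    intro r hr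
    by_contra h
    have hpair : {r, r₀} ⊆ ({i | ¬ μ i ≤ 1} : Finset ι) := by
      intro i hi
      rcases mem_insert.1 hi with rfl | hi
      · simpa using h
      · rw [mem_singleton.1 hi]; simpa using (lt_of_not_ge h).trans_le (hmax r)
    have h2 := card_le_card hpair
    rw [card_pair hr] at h2
    have := card_filter_add_card_filter_not (s := univ) (fun i => μ i ≤ 1)
    rw [card_univ, hcard] at this
    omega
  have hones : 5 ≤ #{r ∈ univ.erase r₀ | μ r = 1} := by
    have hsub : ({r | 1 ≤ μ r} : Finset ι) ⊆ insert r₀ {r ∈ univ.erase r₀ | μ r = 1} := by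
      intro r hr
      rw [mem_filter] at hr
      by_cases h : r = r₀
      · simp [h]
      · simp [h, le_antisymm (hrest r h) hr.2]
    have := (card_le_card hsub).trans (card_insert_le _ _)
    omega
  obtain ⟨r, hr⟩ : ({r | 1 ≤ μ r} : Finset ι).Nonempty := card_pos.1 (by omega)
  have herase : ∀ f : ι → ℝ, ∑ i ∈ univ.erase r₀, f i = ∑ i, f i - f r₀ := fun f => by
    rw [← add_sum_erase _ _ (mem_univ r₀)]; ring
  obtain ⟨h3, hvals⟩ := eq_three_and_eq_one_or_eq_neg_two_of_sum_cubes (s := univ.erase r₀)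
    (by rw [card_erase_of_mem (mem_univ _), card_univ, hcard])
    (by rw [herase, hsum]; ring) (by rw [herase]; linarith)
    ((mem_filter.1 hr).2.trans (hmax r)) (hle r₀) (fun r hr => hrest r (ne_of_mem_erase hr)) hones
  exact ⟨r₀, h3, fun r hr => hvals r (mem_erase.2 ⟨hr, mem_univ r⟩)⟩

structure IsSphericalCode {ι E : Type*} [NormedAddCommGroup E] [InnerProductSpace ℝ E]
    (x : ι → E) (t : ℝ) : Prop where
  norm_eq_one : ∀ i, ‖x i‖ = 1
  inner_le : ∀ i j, i ≠ j → ⟪x i, x j⟫ ≤ t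

section PetersenMatrix

variable {ι E : Type*} [DecidableEq ι] [NormedAddCommGroup E] [InnerProductSpace ℝ E]
  {x : ι → E}

noncomputable def petersenMatrix (x : ι → E) : Matrix ι ι ℝ :=
  1 + (1 / 5 : ℝ) • of (fun _ _ => 1) - (6 / 5 : ℝ) • gram ℝ x

theorem petersenMatrix_apply (i j : ι) :
    petersenMatrix x i j = (if i = j then 1 else 0) + 1 / 5 - 6 / 5 * ⟪x i, x j⟫ := by
  simp [petersenMatrix, one_apply, gram_apply]

theorem petersenMatrix_comm (i j : ι) : petersenMatrix x j i = petersenMatrix x i j := by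
  simp [petersenMatrix_apply, real_inner_comm, eq_comm]

theorem isHermitian_petersenMatrix : (petersenMatrix x).IsHermitian :=
  IsHermitian.ext fun i j => by simp [petersenMatrix_comm]

theorem petersenMatrix_self {i : ι} (hi : ‖x i‖ = 1) : petersenMatrix x i i = 0 := by
  rw [petersenMatrix_apply, if_pos rfl, real_inner_self_eq_norm_sq, hi]
  norm_num

theorem petersenMatrix_nonneg (hx : IsSphericalCode x (1 / 6)) (i j : ι) :
    0 ≤ petersenMatrix x i j := by
  rcases eq_or_ne i j with rfl | hij
  · rw [petersenMatrix_self (hx.norm_eq_one i)]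
  · rw [petersenMatrix_apply, if_neg hij]
    linarith [hx.inner_le i j hij]

variable [Fintype ι]

theorem petersenMatrix_mulVec_apply (z : ι → ℝ) (i : ι) :
    (petersenMatrix x *ᵥ z) i = z i + (∑ j, z j) / 5 - 6 / 5 * ⟪x i, ∑ j, z j • x j⟫ := by
  simp only [mulVec, dotProduct, petersenMatrix_apply, add_mul, sub_mul, ite_mul, one_mul,
    zero_mul, sum_add_distrib, sum_sub_distrib, sum_ite_eq, mem_univ, if_true, inner_sum,
    real_inner_smul_right, mul_sum, sum_div, mul_assoc, mul_comm (z _)]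
  ring_nf

theorem inner_toEuclideanLin_petersenMatrix (z : EuclideanSpace ℝ ι) :
    ⟪toEuclideanLin (petersenMatrix x) z, z⟫
      = ‖z‖ ^ 2 + (∑ i, z i) ^ 2 / 5 - 6 / 5 * ‖∑ i, z i • x i‖ ^ 2 := by
  have hw : ‖∑ i, z i • x i‖ ^ 2 = ∑ i, ⟪x i, ∑ j, z j • x j⟫ * z i := by
    rw [← real_inner_self_eq_norm_sq, sum_inner]
    exact sum_congr rfl fun i _ => by rw [real_inner_smul_left, mul_comm]
  rw [PiLp.inner_apply, EuclideanSpace.real_norm_sq_eq, hw, sq (∑ i, z i), sum_mul, sum_div,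
    mul_sum, ← sum_add_distrib, ← sum_sub_distrib]
  simp only [toLpLin_apply, WithLp.ofLp_toLp, petersenMatrix_mulVec_apply, Real.inner_apply]
  exact sum_congr rfl fun i _ => by ring

end PetersenMatrix

section PetersenSpectrum

variable {ι E : Type*} [Fintype ι] [DecidableEq ι] [NormedAddCommGroup E] [InnerProductSpace ℝ E]
  {x : ι → E} (hB : (petersenMatrix x).IsHermitian)

theorem sum_eigenvalues_petersenMatrix (hunit : ∀ i, ‖x i‖ = 1) : ∑ r, hB.eigenvalues r = 0 := by
  have := hB.trace_eq_sum_eigenvalues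
  simp only [RCLike.ofReal_real_eq_id, id] at this
  simp [← this, trace, petersenMatrix_self (hunit _)]

theorem sum_eigenvalues_pow_three_petersenMatrix_nonneg (hx : IsSphericalCode x (1 / 6)) :
    0 ≤ ∑ r, hB.eigenvalues r ^ 3 := by
  have := hB.trace_pow_eq_sum_eigenvalues_pow 3
  simp only [RCLike.ofReal_real_eq_id, id] at this
  rw [← this]
  exact sum_nonneg fun i _ => pow_apply_nonneg (petersenMatrix_nonneg hx) 3 i i

theorem eigenvalues_petersenMatrix_le (r : ι) : hB.eigenvalues r ≤ 1 + Fintype.card ι / 5 := by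
  have hcs := EuclideanSpace.sq_sum_le_card_mul_norm_sq (hB.eigenvectorBasis r)
  rw [hB.eigenvectorBasis.orthonormal.1 r] at hcs
  rw [hB.eigenvalues_eq_inner_toEuclideanLin, inner_toEuclideanLin_petersenMatrix,
    hB.eigenvectorBasis.orthonormal.1 r]
  nlinarith [sq_nonneg ‖∑ i, hB.eigenvectorBasis r i • x i‖]

theorem card_sub_one_le_card_eigenvalues_le_one :
    Fintype.card ι - 1 ≤ #{r | hB.eigenvalues r ≤ 1} := by
  let sum : EuclideanSpace ℝ ι →ₗ[ℝ] ℝ :=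
    Fintype.linearCombination ℝ (fun _ => 1) ∘ₗ (WithLp.linearEquiv 2 ℝ (ι → ℝ)).toLinearMap
  have hsum : ∀ z, sum z = ∑ i, z i := by simp [sum, Fintype.linearCombination_apply]
  calc Fintype.card ι - 1 = finrank ℝ (EuclideanSpace ℝ ι) - finrank ℝ ℝ := by simp
    _ ≤ finrank ℝ (LinearMap.ker sum) := sum.finrank_sub_finrank_le_finrank_ker
    _ ≤ _ := finrank_le_card_eigenvalues_le hB.toEuclideanLin_eigenvectorBasis 1 _ fun z hz => by
      rw [inner_toEuclideanLin_petersenMatrix, ← hsum, LinearMap.mem_ker.1 hz]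
      nlinarith [sq_nonneg ‖∑ i, z i • x i‖]

theorem card_sub_finrank_le_card_one_le_eigenvalues [FiniteDimensional ℝ E] :
    Fintype.card ι - finrank ℝ E ≤ #{r | 1 ≤ hB.eigenvalues r} := by
  let comb : EuclideanSpace ℝ ι →ₗ[ℝ] E :=
    Fintype.linearCombination ℝ x ∘ₗ (WithLp.linearEquiv 2 ℝ (ι → ℝ)).toLinearMap
  have hcomb : ∀ z, comb z = ∑ i, z i • x i := by simp [comb, Fintype.linearCombination_apply]
  calc Fintype.card ι - finrank ℝ E = finrank ℝ (EuclideanSpace ℝ ι) - finrank ℝ E := by simp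
    _ ≤ finrank ℝ (LinearMap.ker comb) := comb.finrank_sub_finrank_le_finrank_ker
    _ ≤ _ := finrank_le_card_le_eigenvalues hB.toEuclideanLin_eigenvectorBasis 1 _ fun z hz => by
      rw [inner_toEuclideanLin_petersenMatrix, ← hcomb, LinearMap.mem_ker.1 hz, norm_zero]
      nlinarith [sq_nonneg (∑ i, z i)]

theorem exists_eigenvectorBasis_petersenMatrix_eq_const {r : ι}
    (hr : hB.eigenvalues r = 1 + Fintype.card ι / 5) :
    ∃ c ≠ 0, ∀ i, hB.eigenvectorBasis r i = c := by
  set v := hB.eigenvectorBasis r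
  set N : ℝ := (Fintype.card ι : ℝ)
  have hN : 0 < N := Nat.cast_pos.2 (Fintype.card_pos_iff.2 ⟨r⟩)
  -- equality in `eigenvalues_petersenMatrix_le`: `∑ vᵢ xᵢ = 0` and Cauchy-Schwarz is sharp
  have hquad := hB.eigenvalues_eq_inner_toEuclideanLin r
  rw [inner_toEuclideanLin_petersenMatrix, hB.eigenvectorBasis.orthonormal.1 r, hr] at hquad
  have hcs := EuclideanSpace.sq_sum_le_card_mul_norm_sq v
  rw [hB.eigenvectorBasis.orthonormal.1 r] at hcs
  have hw : ‖∑ i, v i • x i‖ = 0 := by nlinarith [sq_nonneg ‖∑ i, v i • x i‖]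
  have hσ : (∑ i, v i) ^ 2 = N := by nlinarith
  have hσ₀ : ∑ i, v i ≠ 0 := fun h => by rw [h, zero_pow two_ne_zero] at hσ; linarith
  refine ⟨(∑ i, v i) / N, div_ne_zero hσ₀ hN.ne', fun i => ?_⟩
  have hi := congr_fun (hB.mulVec_eigenvectorBasis r) i
  rw [petersenMatrix_mulVec_apply, norm_eq_zero.1 hw, inner_zero_right, hr] at hi
  field_simp
  simp only [Pi.smul_apply, smul_eq_mul] at hi
  linarith

end PetersenSpectrum

section Petersen

variable {ι E : Type*} [Fintype ι] [DecidableEq ι] [NormedAddCommGroup E] [InnerProductSpace ℝ E]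
  [FiniteDimensional ℝ E] {x : ι → E}

theorem exists_petersen_spectrum (hB : (petersenMatrix x).IsHermitian)
    (hcard : Fintype.card ι = 10) (hdim : finrank ℝ E ≤ 4) (hx : IsSphericalCode x (1 / 6)) :
    ∃ r₀, hB.eigenvalues r₀ = 3 ∧ ∀ r ≠ r₀, hB.eigenvalues r = 1 ∨ hB.eigenvalues r = -2 := by
  refine exists_eq_three_of_spectral_bounds hcard
    (sum_eigenvalues_petersenMatrix hB hx.norm_eq_one)
    (sum_eigenvalues_pow_three_petersenMatrix_nonneg hB hx) (fun r => ?_) ?_ ?_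
  · have := eigenvalues_petersenMatrix_le hB r
    rw [hcard] at this
    norm_num at this
    linarith
  · have := card_sub_one_le_card_eigenvalues_le_one hB
    omega
  · have := card_sub_finrank_le_card_one_le_eigenvalues hB
    omega

theorem petersenMatrix_sq_add_self_sub_two (hcard : Fintype.card ι = 10)
    (hdim : finrank ℝ E ≤ 4) (hx : IsSphericalCode x (1 / 6)) :
    petersenMatrix x ^ 2 + petersenMatrix x - 2 = of fun _ _ => 1 := by
  have hB := isHermitian_petersenMatrix (x := x)
  obtain ⟨r₀, h₀, hrest⟩ := exists_petersen_spectrum hB hcard hdim hx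
  obtain ⟨c, hc, hconst⟩ :=
    exists_eigenvectorBasis_petersenMatrix_eq_const hB (r := r₀) (by rw [h₀, hcard]; norm_num)
  have hsum_zero : ∀ r ≠ r₀, ∑ i, hB.eigenvectorBasis r i = 0 := fun r hr => by
    have := hB.eigenvectorBasis.orthonormal.2 (Ne.symm hr)
    simp only [PiLp.inner_apply, hconst, Real.inner_apply, ← mul_sum] at this
    exact (mul_eq_zero.1 this).resolve_left hc
  have hJ : ∀ v : ι → ℝ, (of fun _ _ => 1 : Matrix ι ι ℝ) *ᵥ v = fun _ => ∑ i, v i :=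
    fun v => by ext; simp [mulVec, dotProduct]
  -- on the eigenbasis, `J` kills every vector but the constant one, where it acts as `10`
  refine ext_of_mulVec_orthonormalBasis hB.eigenvectorBasis fun r => ?_
  simp only [add_mulVec, sub_mulVec, pow_two, ← mulVec_mulVec, hB.mulVec_eigenvectorBasis,
    mulVec_smul, ofNat_mulVec, hJ, smul_smul]
  ext i
  simp only [Pi.sub_apply, Pi.add_apply, Pi.smul_apply, smul_eq_mul]
  by_cases hr : r = r₀
  · subst hr
    simp only [h₀, hconst, sum_const, card_univ, hcard, nsmul_eq_mul]
    ring
  · rw [hsum_zero r hr]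
    rcases hrest r hr with h | h <;> rw [h] <;> ring

theorem sum_petersenMatrix_row (hcard : Fintype.card ι = 10) (hdim : finrank ℝ E ≤ 4)
    (hx : IsSphericalCode x (1 / 6)) (i : ι) : ∑ j, petersenMatrix x i j = 3 := by
  have hB := isHermitian_petersenMatrix (x := x)
  obtain ⟨r₀, h₀, -⟩ := exists_petersen_spectrum hB hcard hdim hx
  obtain ⟨c, hc, hconst⟩ :=
    exists_eigenvectorBasis_petersenMatrix_eq_const hB (r := r₀) (by rw [h₀, hcard]; norm_num)
  have hi := congr_fun (hB.mulVec_eigenvectorBasis r₀) i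
  simp only [mulVec, dotProduct, hconst, Pi.smul_apply, smul_eq_mul, h₀, ← sum_mul] at hi
  exact mul_right_cancel₀ hc hi

theorem petersenMatrix_eq_zero_or_eq_one (hcard : Fintype.card ι = 10) (hdim : finrank ℝ E ≤ 4)
    (hx : IsSphericalCode x (1 / 6)) (i j : ι) :
    petersenMatrix x i j = 0 ∨ petersenMatrix x i j = 1 := by
  have hsq := congr_fun₂ (petersenMatrix_sq_add_self_sub_two hcard hdim hx) i
  simp only [Matrix.sub_apply, Matrix.add_apply, of_apply, ofNat_apply, Nat.cast_ite,
    Nat.cast_ofNat, Nat.cast_zero] at hsq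
  have hle : ∀ k, petersenMatrix x i k ≤ 1 := fun k => by
    have := hsq k
    rcases eq_or_ne i k with rfl | hik
    · rw [petersenMatrix_self (hx.norm_eq_one i)]; norm_num
    · rw [if_neg hik] at this
      linarith [pow_apply_nonneg (petersenMatrix_nonneg hx) 2 i k]
  have hdiag : ∑ k, petersenMatrix x i k * petersenMatrix x i k = 3 := by
    have := hsq i
    rw [if_pos rfl, petersenMatrix_self (hx.norm_eq_one i), pow_two, mul_apply] at this
    simp only [petersenMatrix_comm i] at this
    linarith
  have hterm : ∀ k ∈ univ, 0 ≤ petersenMatrix x i k * (1 - petersenMatrix x i k) := fun k _ =>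
    mul_nonneg (petersenMatrix_nonneg hx i k) (sub_nonneg.2 (hle k))
  have hzero : ∑ k, petersenMatrix x i k * (1 - petersenMatrix x i k) = 0 := by
    simp only [mul_sub, mul_one, sum_sub_distrib, hdiag, sum_petersenMatrix_row hcard hdim hx i,
      sub_self]
  rcases mul_eq_zero.1 ((sum_eq_zero_iff_of_nonneg hterm).1 hzero j (mem_univ j)) with h | h
  · exact Or.inl h
  · exact Or.inr (by linarith)

theorem inner_eq_neg_two_thirds_or_one_sixth (hcard : Fintype.card ι = 10)
    (hdim : finrank ℝ E ≤ 4) (hx : IsSphericalCode x (1 / 6)) {i j : ι} (hij : i ≠ j) :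
    ⟪x i, x j⟫ = -2 / 3 ∨ ⟪x i, x j⟫ = 1 / 6 := by
  have := petersenMatrix_eq_zero_or_eq_one hcard hdim hx i j
  rw [petersenMatrix_apply, if_neg hij] at this
  rcases this with h | h
  · right; linarith
  · left; linarith

theorem card_offDiag_inner_eq_neg_two_thirds (hcard : Fintype.card ι = 10)
    (hdim : finrank ℝ E ≤ 4) (hx : IsSphericalCode x (1 / 6)) :
    #{p ∈ (univ : Finset ι).offDiag | ⟪x p.1, x p.2⟫ = -2 / 3} = 30 := by
  have hset : {p ∈ (univ : Finset ι).offDiag | ⟪x p.1, x p.2⟫ = -2 / 3}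
      = ({p : ι × ι | petersenMatrix x p.1 p.2 = 1} : Finset (ι × ι)) := by
    ext ⟨i, j⟩
    rcases eq_or_ne i j with rfl | hij
    · simp [petersenMatrix_self (hx.norm_eq_one i)]
    · simp only [mem_filter, mem_offDiag, mem_univ, true_and, petersenMatrix_apply, if_neg hij]
      constructor
      · rintro ⟨-, h⟩; rw [h]; norm_num
      · intro h; exact ⟨hij, by linarith⟩
  have hcount : (#{p : ι × ι | petersenMatrix x p.1 p.2 = 1} : ℝ)
      = ∑ i, ∑ j, petersenMatrix x i j := by
    rw [natCast_card_filter, Fintype.sum_prod_type]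
    refine sum_congr rfl fun i _ => sum_congr rfl fun j _ => ?_
    rcases petersenMatrix_eq_zero_or_eq_one hcard hdim hx i j with h | h <;> simp [h]
  norm_num [sum_petersenMatrix_row hcard hdim hx, hcard] at hcount
  rw [hset]
  exact_mod_cast hcount

theorem card_offDiag_inner_eq_one_sixth (hcard : Fintype.card ι = 10)
    (hdim : finrank ℝ E ≤ 4) (hx : IsSphericalCode x (1 / 6)) :
    #{p ∈ (univ : Finset ι).offDiag | ⟪x p.1, x p.2⟫ = 1 / 6} = 60 := by
  have hset : {p ∈ (univ : Finset ι).offDiag | ⟪x p.1, x p.2⟫ = 1 / 6}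
      = {p ∈ (univ : Finset ι).offDiag | ¬ ⟪x p.1, x p.2⟫ = -2 / 3} := by
    refine filter_congr fun p hp => ?_
    rcases inner_eq_neg_two_thirds_or_one_sixth hcard hdim hx (mem_offDiag.1 hp).2.2
      with h | h <;> rw [h] <;> norm_num
  have := card_filter_add_card_filter_not (s := (univ : Finset ι).offDiag)
    (fun p => ⟪x p.1, x p.2⟫ = -2 / 3)
  rw [card_offDiag_inner_eq_neg_two_thirds hcard hdim hx, offDiag_card, card_univ, hcard] at this
  rw [hset]
  omega

end Petersen

theorem ncard_pairs_eq_card_filter_offDiag {α : Type*} (C : Finset α) (P : α → α → Prop)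
    [DecidableRel P] :
    {p : α × α | p.1 ∈ C ∧ p.2 ∈ C ∧ p.1 ≠ p.2 ∧ P p.1 p.2}.ncard
      = #{q ∈ (univ : Finset C).offDiag | P q.1 q.2} := by
  rw [← Set.ncard_coe_finset, ← Set.ncard_image_of_injective _
    (Subtype.val_injective.prodMap Subtype.val_injective)]
  congr 1
  ext ⟨a, b⟩
  aesop

theorem petersen_pair_distance_distribution
    (C : Finset (EuclideanSpace ℝ (Fin 4)))
    (hcard : C.card = 10)
    (hunit : ∀ c ∈ C, ‖c‖ = 1)
    (hinner : ∀ c ∈ C, ∀ c' ∈ C, c ≠ c' → ⟪c, c'⟫ ≤ (1 / 6 : ℝ)) :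
    {p : EuclideanSpace ℝ (Fin 4) × EuclideanSpace ℝ (Fin 4) |
      p.1 ∈ C ∧ p.2 ∈ C ∧ p.1 ≠ p.2 ∧ ⟪p.1, p.2⟫ = (-2 / 3 : ℝ)}.ncard = 30 ∧
    {p : EuclideanSpace ℝ (Fin 4) × EuclideanSpace ℝ (Fin 4) |
      p.1 ∈ C ∧ p.2 ∈ C ∧ p.1 ≠ p.2 ∧ ⟪p.1, p.2⟫ = (1 / 6 : ℝ)}.ncard = 60 := by
  have hcard' : Fintype.card C = 10 := by rw [Fintype.card_coe, hcard]
  have hdim : finrank ℝ (EuclideanSpace ℝ (Fin 4)) ≤ 4 := by simp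
  have hx : IsSphericalCode (Subtype.val : C → EuclideanSpace ℝ (Fin 4)) (1 / 6) :=
    ⟨fun c => hunit c c.2, fun c c' h => hinner c c.2 c' c'.2 (Subtype.coe_ne_coe.2 h)⟩
  exact ⟨(ncard_pairs_eq_card_filter_offDiag C (fun a b => ⟪a, b⟫ = -2 / 3)).trans
      (card_offDiag_inner_eq_neg_two_thirds hcard' hdim hx),
    (ncard_pairs_eq_card_filter_offDiag C (fun a b => ⟪a, b⟫ = 1 / 6)).trans
      (card_offDiag_inner_eq_one_sixth hcard' hdim hx)⟩
end
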